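/- arXiv:2602.14303 — 2 statements merged into one kernel-verified Lean document; each statement's English description precedes it below -/
import Mathlib

section
/- For all real parameters λ > 0 with λ ≠ 1 and φ > 0, and every u with 0 < u < 1, the value Q(u) = (log( (log λ) / log(u(1 − λ) + λ) ))^(1/φ) is a well-defined nonnegative real number (i.e. u(1 − λ) + λ > 0 and (log λ)/log(u(1 − λ) + λ) ≥ 1) and satisfies F(Q(u)) = u, where F is the SMPtW cumulative distribution function. -/
/-!
The point `t = u * (1 - λ) + λ = u * 1 + (1 - u) * λ` lies in `[λ, 1)` or `(1, λ]`, so `log t` has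
the sign of `log λ` and smaller absolute value; hence `log λ / log t ≥ 1` and `Q u` is the
`φ`-th root of a nonnegative number. Then `exp (-(Q u) ^ φ) = log t / log λ`, so the CDF unwinds
to `(t - λ) / (1 - λ) = u`.
-/

open Real

/-- The SMPtW cumulative distribution function. -/
noncomputable def smptwCDF (lam phi y : ℝ) : ℝ :=
  (Real.exp (Real.log lam * Real.exp (-(y ^ phi))) - lam) / (1 - lam)

/-- The SMPtW quantile function. -/
noncomputable def smptwQuantile (lam phi u : ℝ) : ℝ :=
  (Real.log (Real.log lam / Real.log (u * (1 - lam) + lam))) ^ (1 / phi)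

lemma mul_one_sub_add_self_pos {lam u : ℝ} (hlam : 0 < lam) (hu0 : 0 ≤ u) (hu1 : u ≤ 1) :
    0 < u * (1 - lam) + lam := by
  have hconv := convex_Ioi (0 : ℝ) one_pos hlam hu0 (sub_nonneg.2 hu1) (add_sub_cancel u 1)
  simp only [Set.mem_Ioi, smul_eq_mul] at hconv
  linarith

lemma one_le_log_div_log_mul_one_sub_add_self {lam u : ℝ} (hlam : 0 < lam) (hlam1 : lam ≠ 1)
    (hu0 : 0 ≤ u) (hu1 : u < 1) :
    1 ≤ log lam / log (u * (1 - lam) + lam) := by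
  have ht : 0 < u * (1 - lam) + lam := mul_one_sub_add_self_pos hlam hu0 hu1.le
  rw [one_le_div_iff]
  rcases hlam1.lt_or_gt with hlt | hgt
  · exact Or.inr ⟨log_neg ht (by nlinarith), log_le_log hlam (by nlinarith)⟩
  · exact Or.inl ⟨log_pos (by nlinarith), log_le_log ht (by nlinarith)⟩

lemma smptwQuantile_nonneg {lam phi u : ℝ} (h : 1 ≤ log lam / log (u * (1 - lam) + lam)) :
    0 ≤ smptwQuantile lam phi u :=
  rpow_nonneg (log_nonneg h) _

lemma smptwQuantile_rpow {lam phi u : ℝ} (hphi : phi ≠ 0)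
    (h : 1 ≤ log lam / log (u * (1 - lam) + lam)) :
    smptwQuantile lam phi u ^ phi = log (log lam / log (u * (1 - lam) + lam)) := by
  rw [smptwQuantile, one_div, rpow_inv_rpow (log_nonneg h) hphi]

lemma smptwCDF_eq_of_rpow_eq_log {lam phi y s : ℝ} (hs : 0 < log lam / s)
    (hy : y ^ phi = log (log lam / s)) :
    smptwCDF lam phi y = (exp s - lam) / (1 - lam) := by
  have hlam : log lam ≠ 0 := by
    rintro h
    simp [h] at hs
  rw [smptwCDF, hy, exp_neg, exp_log hs, inv_div, mul_div_cancel₀ _ hlam]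

/-- the quantile function is a well-defined nonnegative real number
(i.e. `u(1 − λ) + λ > 0` and `(log λ)/log(u(1 − λ) + λ) ≥ 1`) and satisfies `F (Q u) = u`. -/
theorem smptw_quantile_wellDefined_and_inverts (lam phi : ℝ)
    (hlam : 0 < lam) (hlam1 : lam ≠ 1) (hphi : 0 < phi)
    (u : ℝ) (hu0 : 0 < u) (hu1 : u < 1) :
    0 < u * (1 - lam) + lam ∧
    1 ≤ Real.log lam / Real.log (u * (1 - lam) + lam) ∧
    0 ≤ smptwQuantile lam phi u ∧
    smptwCDF lam phi (smptwQuantile lam phi u) = u := by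
  have ht := mul_one_sub_add_self_pos hlam hu0.le hu1.le
  have hratio := one_le_log_div_log_mul_one_sub_add_self hlam hlam1 hu0.le hu1
  refine ⟨ht, hratio, smptwQuantile_nonneg hratio, ?_⟩
  rw [smptwCDF_eq_of_rpow_eq_log (one_pos.trans_le hratio) (smptwQuantile_rpow hphi.ne' hratio),
    exp_log ht, add_sub_cancel_right, mul_div_cancel_right₀ _ (sub_ne_zero.mpr hlam1.symm)]
end

section
/- For all real parameters λ > 0 with λ ≠ 1 and φ > 0, and every real r > 0, the r-th moment of the SMPtW distribution satisfies ∫₀^∞ y^r · ((log λ) φ y^(φ−1) exp((log λ)·exp(−y^φ) − y^φ))/(λ − 1) dy = ((log λ)/(λ − 1)) · Γ(r/φ + 1) · Σ_{j=0}^∞ (log λ)^j / (j! · (j + 1)^(r/φ + 1)). -/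
open Real MeasureTheory

/-- The SMPtW probability density function with parameters `lam > 0`, `lam ≠ 1`, `phi > 0`. -/
noncomputable def smptwPDF (lam phi y : ℝ) : ℝ :=
  (Real.log lam * phi * y ^ (phi - 1) *
    Real.exp (Real.log lam * Real.exp (-(y ^ phi)) - y ^ phi)) / (lam - 1)

open Set

/-!
Substituting `t = y ^ φ` turns the moment into
`(log λ / (λ - 1)) ∫₀^∞ t ^ (r/φ) e^{c e^{-t} - t} dt` with `c = log λ`. Expanding `e^{c e^{-t}}`
as an exponential series gives terms `c^j / j! · t ^ (r/φ) e^{-(j+1) t}`, each a Gamma integral;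
the series of their absolute integrals is dominated by `Γ(r/φ + 1) ∑ |c|^j / j!`, so summation
and integration may be exchanged.
-/

lemma summable_pow_div_factorial_mul_rpow (x : ℝ) {s : ℝ} (hs : 0 ≤ s) :
    Summable fun j : ℕ => x ^ j / ((j.factorial : ℝ) * ((j : ℝ) + 1) ^ s) := by
  refine (Real.summable_pow_div_factorial |x|).of_norm_bounded fun j => ?_
  have hone : 1 ≤ ((j : ℝ) + 1) ^ s := Real.one_le_rpow (by linarith [j.cast_nonneg (α := ℝ)]) hs
  rw [norm_div, norm_mul, norm_pow, Real.norm_eq_abs, Real.norm_natCast,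
    Real.norm_of_nonneg (by positivity)]
  gcongr
  exact le_mul_of_one_le_right (by positivity) hone

lemma integral_rpow_mul_rpow_comp_Ioi {φ : ℝ} (hφ : 0 < φ) (r : ℝ) (g : ℝ → ℝ) :
    ∫ y in Ioi 0, y ^ r * (φ * y ^ (φ - 1) * g (y ^ φ)) = ∫ t in Ioi 0, t ^ (r / φ) * g t := by
  rw [← integral_comp_rpow_Ioi_of_pos hφ (g := fun t => t ^ (r / φ) * g t)]
  refine setIntegral_congr_fun measurableSet_Ioi fun y (hy : 0 < y) => ?_
  rw [smul_eq_mul, ← Real.rpow_mul hy.le, mul_div_cancel₀ _ hφ.ne']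
  ring

section ExpSeries

variable (c : ℝ) {a : ℝ}

lemma hasSum_pow_div_factorial_mul_rpow_mul_exp (t : ℝ) :
    HasSum (fun j : ℕ => c ^ j / j.factorial * (t ^ a * exp (-((j + 1) * t))))
      (t ^ a * exp (c * exp (-t) - t)) := by
  have hexp : HasSum (fun j : ℕ => (c * exp (-t)) ^ j / j.factorial) (exp (c * exp (-t))) := by
    rw [Real.exp_eq_exp_ℝ]
    exact NormedSpace.expSeries_div_hasSum_exp _
  have hterm (j : ℕ) : c ^ j / j.factorial * (t ^ a * exp (-((j + 1) * t))) =
      t ^ a * exp (-t) * ((c * exp (-t)) ^ j / j.factorial) := by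
    rw [mul_pow, ← Real.exp_nat_mul, mul_neg, add_mul, one_mul, neg_add, Real.exp_add]
    ring
  have hsum : t ^ a * exp (c * exp (-t) - t) = t ^ a * exp (-t) * exp (c * exp (-t)) := by
    rw [sub_eq_neg_add, Real.exp_add]
    ring
  rw [funext hterm, hsum]
  exact hexp.mul_left _

variable (ha : -1 < a)
include ha

lemma integrableOn_pow_div_factorial_mul_rpow_mul_exp (j : ℕ) :
    IntegrableOn (fun t : ℝ => c ^ j / j.factorial * (t ^ a * exp (-((j + 1) * t)))) (Ioi 0) := by
  have h := integrableOn_rpow_mul_exp_neg_mul_rpow ha one_pos (b := j + 1) (by positivity)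
  simp only [Real.rpow_one, neg_mul] at h
  exact h.const_mul _

lemma integral_pow_div_factorial_mul_rpow_mul_exp (j : ℕ) :
    ∫ t in Ioi 0, c ^ j / j.factorial * (t ^ a * exp (-((j + 1) * t))) =
      Gamma (a + 1) * (c ^ j / ((j.factorial : ℝ) * ((j : ℝ) + 1) ^ (a + 1))) := by
  have h :=
    integral_rpow_mul_exp_neg_mul_Ioi (a := a + 1) (r := j + 1) (by linarith) (by positivity)
  rw [add_sub_cancel_right] at h
  rw [integral_const_mul, h, one_div, Real.inv_rpow (by positivity)]
  field_simp

lemma integral_rpow_mul_exp_mul_exp_neg_sub :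
    ∫ t in Ioi 0, t ^ a * exp (c * exp (-t) - t) =
      Gamma (a + 1) * ∑' j : ℕ, c ^ j / ((j.factorial : ℝ) * ((j : ℝ) + 1) ^ (a + 1)) := by
  -- the absolute values of the terms are the terms of the same series for `|c|`
  have hnorm (j : ℕ) : ∫ t in Ioi 0, ‖c ^ j / j.factorial * (t ^ a * exp (-((j + 1) * t)))‖ =
      Gamma (a + 1) * (|c| ^ j / ((j.factorial : ℝ) * ((j : ℝ) + 1) ^ (a + 1))) := by
    rw [← integral_pow_div_factorial_mul_rpow_mul_exp |c| ha j]
    refine setIntegral_congr_fun measurableSet_Ioi fun t (ht : 0 < t) => ?_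
    rw [norm_mul, norm_div, norm_pow, Real.norm_eq_abs,
      Real.norm_natCast, Real.norm_of_nonneg (by positivity)]
  have hsummable := (summable_pow_div_factorial_mul_rpow |c| (by linarith : 0 ≤ a + 1)).mul_left
    (Gamma (a + 1))
  rw [← funext hnorm] at hsummable
  rw [← tsum_mul_left, ← tsum_congr (integral_pow_div_factorial_mul_rpow_mul_exp c ha),
    integral_tsum_of_summable_integral_norm
      (integrableOn_pow_div_factorial_mul_rpow_mul_exp c ha) hsummable]
  exact setIntegral_congr_fun measurableSet_Ioi fun t _ =>
    (hasSum_pow_div_factorial_mul_rpow_mul_exp c t).tsum_eq.symm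

end ExpSeries

theorem smptw_rth_moment_general (lam phi r : ℝ)
    (hphi : 0 < phi) (hr : 0 < r) :
    ∫ y in Set.Ioi (0 : ℝ), y ^ r * smptwPDF lam phi y =
      (Real.log lam / (lam - 1)) * Real.Gamma (r / phi + 1) *
        ∑' j : ℕ, (Real.log lam) ^ j /
          ((j.factorial : ℝ) * ((j : ℝ) + 1) ^ (r / phi + 1)) := by
  have hpdf (y : ℝ) : y ^ r * smptwPDF lam phi y = Real.log lam / (lam - 1) *
      (y ^ r * (phi * y ^ (phi - 1) * exp (Real.log lam * exp (-y ^ phi) - y ^ phi))) := by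
    unfold smptwPDF
    ring
  have hrphi : -1 < r / phi := by linarith [div_pos hr hphi]
  simp only [hpdf]
  rw [integral_const_mul,
    integral_rpow_mul_rpow_comp_Ioi hphi r fun t => exp (Real.log lam * exp (-t) - t),
    integral_rpow_mul_exp_mul_exp_neg_sub _ hrphi]
  ring

/-- the `r`-th moment of the SMPtW distribution. -/
theorem smptw_rth_moment (lam phi r : ℝ)
    (hlam : 0 < lam) (hlam1 : lam ≠ 1) (hphi : 0 < phi) (hr : 0 < r) :
    ∫ y in Set.Ioi (0 : ℝ), y ^ r * smptwPDF lam phi y =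
      (Real.log lam / (lam - 1)) * Real.Gamma (r / phi + 1) *
        ∑' j : ℕ, (Real.log lam) ^ j /
          ((j.factorial : ℝ) * ((j : ℝ) + 1) ^ (r / phi + 1)) :=
  smptw_rth_moment_general lam phi r hphi hr
end
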